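/- C_max is monotone under maximally incoherent operations: if Λ is a completely positive trace-preserving map on d×d complex matrices such that Λ(δ) is incoherent for every incoherent state δ, then for every state ρ one has C_max(Λ(ρ)) ≤ C_max(ρ). -/

import Mathlib

open scoped Matrix ComplexOrder

namespace OneShot

variable {ι κ : Type*} [Fintype ι] [DecidableEq ι] [Fintype κ] [DecidableEq κ]

/-- A quantum state: a positive semidefinite matrix with unit trace. -/
def IsState (ρ : Matrix ι ι ℂ) : Prop := ρ.PosSemidef ∧ ρ.trace = 1

/-- An incoherent state: a state that is diagonal in the computational basis. -/
def IsIncoherent (ρ : Matrix ι ι ℂ) : Prop := IsState ρ ∧ ρ.IsDiag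

/-- The completely dephasing channel `Δ`. -/
def dephase (ρ : Matrix ι ι ℂ) : Matrix ι ι ℂ := Matrix.diagonal fun i => ρ i i

/-- The max-relative entropy of coherence
`C_max(ρ) = min_{δ ∈ 𝓘} D_max(ρ‖δ) = log₂ min {λ ≥ 0 | ∃ δ ∈ 𝓘, ρ ≤ λ δ}`. -/
noncomputable def Cmax (ρ : Matrix ι ι ℂ) : ℝ :=
  Real.logb 2 (sInf {l : ℝ | 0 ≤ l ∧ ∃ δ, IsIncoherent δ ∧ (l • δ - ρ).PosSemidef})

/-- `C_{Δ,max}(ρ) = log₂ min {λ ≥ 0 | ρ ≤ λ Δ(ρ)}`. -/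
noncomputable def CDmax (ρ : Matrix ι ι ℂ) : ℝ :=
  Real.logb 2 (sInf {l : ℝ | 0 ≤ l ∧ (l • dephase ρ - ρ).PosSemidef})

/-- Complete positivity of a linear map on matrices. -/
def CompletelyPositive (Λ : Matrix ι ι ℂ →ₗ[ℂ] Matrix κ κ ℂ) : Prop :=
  ∀ (k : ℕ) (M : Matrix (Fin k × ι) (Fin k × ι) ℂ), M.PosSemidef →
    (Matrix.of fun p q : Fin k × κ =>
      Λ (Matrix.of fun x y => M (p.1, x) (q.1, y)) p.2 q.2).PosSemidef

/-- Trace preservation. -/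
def TracePreserving (Λ : Matrix ι ι ℂ →ₗ[ℂ] Matrix κ κ ℂ) : Prop :=
  ∀ A, (Λ A).trace = A.trace

/-- A maximally incoherent operation (MIO): a CPTP map sending every incoherent state
to an incoherent state. -/
def IsMIO (Λ : Matrix ι ι ℂ →ₗ[ℂ] Matrix κ κ ℂ) : Prop :=
  CompletelyPositive Λ ∧ TracePreserving Λ ∧ ∀ δ, IsIncoherent δ → IsIncoherent (Λ δ)

/-- A dephasing-covariant incoherent operation (DIO): a CPTP map commuting with `Δ`. -/
def IsDIO (Λ : Matrix ι ι ℂ →ₗ[ℂ] Matrix ι ι ℂ) : Prop :=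
  CompletelyPositive Λ ∧ TracePreserving Λ ∧ ∀ ρ, Λ (dephase ρ) = dephase (Λ ρ)

/-- An incoherent-preserving (Kraus) operator: `K δ Kᴴ` is a nonnegative multiple of an
incoherent state, for every incoherent state `δ`. -/
def IncoherentPreserving (K : Matrix κ ι ℂ) : Prop :=
  ∀ δ : Matrix ι ι ℂ, IsIncoherent δ →
    ∃ c : ℝ, 0 ≤ c ∧ ∃ δ' : Matrix κ κ ℂ, IsIncoherent δ' ∧ K * δ * Kᴴ = (c : ℂ) • δ'

/-- An incoherent operation (IO). -/
def IsIO (Λ : Matrix ι ι ℂ →ₗ[ℂ] Matrix κ κ ℂ) : Prop :=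
  ∃ (N : ℕ) (K : Fin N → Matrix κ ι ℂ),
    (∀ n, IncoherentPreserving (K n)) ∧ (∑ n, (K n)ᴴ * K n = 1) ∧
    ∀ ρ, Λ ρ = ∑ n, K n * ρ * (K n)ᴴ

/-- A strictly incoherent operation (SIO). -/
def IsSIO (Λ : Matrix ι ι ℂ →ₗ[ℂ] Matrix κ κ ℂ) : Prop :=
  ∃ (N : ℕ) (K : Fin N → Matrix κ ι ℂ),
    (∀ n, IncoherentPreserving (K n)) ∧ (∀ n, IncoherentPreserving (K n)ᴴ) ∧
    (∑ n, (K n)ᴴ * K n = 1) ∧ ∀ ρ, Λ ρ = ∑ n, K n * ρ * (K n)ᴴ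

/-- The outer product `|ψ⟩⟨ψ|`. -/
def outer (ψ : ι → ℂ) : Matrix ι ι ℂ := Matrix.of fun i j => ψ i * star (ψ j)

/-- `T ψ` is the number of nonzero computational-basis coefficients of `ψ`. -/
noncomputable def T (ψ : ι → ℂ) : ℕ := (Finset.univ.filter fun i => ψ i ≠ 0).card

/-- A finite pure-state decomposition `ρ = Σ_j p_j |ψ_j⟩⟨ψ_j|`. -/
def IsDecomposition (ρ : Matrix ι ι ℂ) (n : ℕ) (p : Fin n → ℝ) (ψ : Fin n → ι → ℂ) : Prop :=
  (∀ j, 0 < p j) ∧ (∑ j, p j = 1) ∧ (∀ j, ∑ i, Complex.normSq (ψ j i) = 1) ∧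
    ρ = ∑ j, p j • outer (ψ j)

/-- `C_0(ρ) = min over decompositions of max_j log₂ T(ψ_j)`. -/
noncomputable def C0 (ρ : Matrix ι ι ℂ) : ℝ :=
  sInf { r | ∃ n p ψ, IsDecomposition ρ n p ψ ∧
    r = Real.logb 2 (↑(Finset.univ.sup fun j => T (ψ j)) : ℝ) }

/-- Matrix square root of a positive semidefinite matrix (junk value `0` elsewhere). -/
noncomputable def msqrt (A : Matrix ι ι ℂ) : Matrix ι ι ℂ :=
  letI := Classical.propDecidable A.PosSemidef
  if h : A.PosSemidef then
    (h.1.eigenvectorUnitary : Matrix ι ι ℂ) * Matrix.diagonal ((↑) ∘ (√·) ∘ h.1.eigenvalues) *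
      (star (h.1.eigenvectorUnitary : Matrix ι ι ℂ))
  else 0

/-- Uhlmann fidelity `F(ρ,σ) = (Tr √(√ρ σ √ρ))²`. -/
noncomputable def Fid (ρ σ : Matrix ι ι ℂ) : ℝ :=
  ((msqrt (msqrt ρ * σ * msqrt ρ)).trace.re) ^ 2

/-- Smoothed `C_max`. -/
noncomputable def Cmaxeps (ρ : Matrix ι ι ℂ) (ε : ℝ) : ℝ :=
  sInf { r | ∃ ρ', IsState ρ' ∧ 1 - ε ≤ Fid ρ ρ' ∧ r = Cmax ρ' }

/-- Smoothed `C_{Δ,max}`. -/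
noncomputable def CDmaxeps (ρ : Matrix ι ι ℂ) (ε : ℝ) : ℝ :=
  sInf { r | ∃ ρ', IsState ρ' ∧ 1 - ε ≤ Fid ρ ρ' ∧ r = CDmax ρ' }

/-- Smoothed `C_0`. -/
noncomputable def C0eps (ρ : Matrix ι ι ℂ) (ε : ℝ) : ℝ :=
  sInf { r | ∃ ρ', IsState ρ' ∧ 1 - ε ≤ Fid ρ ρ' ∧ r = C0 ρ' }

/-- The maximally coherent state `Ψ_M = |Ψ_M⟩⟨Ψ_M|` of dimension `M`. -/
noncomputable def PsiM (M : ℕ) : Matrix (Fin M) (Fin M) ℂ := Matrix.of fun _ _ => (1 : ℂ) / M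

/-- One-shot coherence cost under MIO. -/
noncomputable def CMIOeps (ρ : Matrix ι ι ℂ) (ε : ℝ) : ℝ :=
  sInf { r | ∃ M : ℕ, 1 ≤ M ∧ r = Real.logb 2 M ∧
    ∃ Λ : Matrix (Fin M) (Fin M) ℂ →ₗ[ℂ] Matrix ι ι ℂ, IsMIO Λ ∧ 1 - ε ≤ Fid ρ (Λ (PsiM M)) }

/-- One-shot coherence cost under DIO. -/
noncomputable def CDIOeps (ρ : Matrix ι ι ℂ) (ε : ℝ) : ℝ :=
  sInf { r | ∃ M : ℕ, 1 ≤ M ∧ r = Real.logb 2 M ∧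
    ∃ Λ : Matrix (Fin M) (Fin M) ℂ →ₗ[ℂ] Matrix ι ι ℂ,
      CompletelyPositive Λ ∧ TracePreserving Λ ∧ (∀ ω, Λ (dephase ω) = dephase (Λ ω)) ∧
      1 - ε ≤ Fid ρ (Λ (PsiM M)) }

/-- One-shot coherence cost under IO. -/
noncomputable def CIOeps (ρ : Matrix ι ι ℂ) (ε : ℝ) : ℝ :=
  sInf { r | ∃ M : ℕ, 1 ≤ M ∧ r = Real.logb 2 M ∧
    ∃ Λ : Matrix (Fin M) (Fin M) ℂ →ₗ[ℂ] Matrix ι ι ℂ, IsIO Λ ∧ 1 - ε ≤ Fid ρ (Λ (PsiM M)) }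

/-- One-shot coherence cost under SIO. -/
noncomputable def CSIOeps (ρ : Matrix ι ι ℂ) (ε : ℝ) : ℝ :=
  sInf { r | ∃ M : ℕ, 1 ≤ M ∧ r = Real.logb 2 M ∧
    ∃ Λ : Matrix (Fin M) (Fin M) ℂ →ₗ[ℂ] Matrix ι ι ℂ, IsSIO Λ ∧ 1 - ε ≤ Fid ρ (Λ (PsiM M)) }

/-- Matrix logarithm (base 2) via the spectral decomposition, with `log₂ 0 = 0` junk
convention on the kernel, and junk value `0` on non-Hermitian matrices. -/
noncomputable def mlog2 (A : Matrix ι ι ℂ) : Matrix ι ι ℂ :=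
  letI := Classical.propDecidable A.IsHermitian
  if h : A.IsHermitian then
    (h.eigenvectorUnitary : Matrix ι ι ℂ) *
      Matrix.diagonal (fun i => (Real.logb 2 (h.eigenvalues i) : ℂ)) *
      (h.eigenvectorUnitary : Matrix ι ι ℂ)ᴴ
  else 0

/-- The relative entropy of coherence `C_r(ρ) = min_{δ ∈ 𝓘} S(ρ‖δ)`, where the minimum
is (equivalently) restricted to those `δ` whose support contains the support of `ρ`,
on which `S(ρ‖δ) = Tr[ρ (log₂ ρ − log₂ δ)]` is finite. -/
noncomputable def Cr (ρ : Matrix ι ι ℂ) : ℝ :=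
  sInf { r | ∃ δ, IsIncoherent δ ∧ (∀ v : ι → ℂ, δ.mulVec v = 0 → ρ.mulVec v = 0) ∧
    r = ((ρ * (mlog2 ρ - mlog2 δ)).trace).re }

/-- Von Neumann entropy (base 2). -/
noncomputable def vN (σ : Matrix ι ι ℂ) : ℝ := -((σ * mlog2 σ).trace.re)

/-- The coherence of formation. -/
noncomputable def Cf (ρ : Matrix ι ι ℂ) : ℝ :=
  sInf { r | ∃ n p ψ, IsDecomposition ρ n p ψ ∧
    r = ∑ j, p j * vN (dephase (outer (ψ j))) }

/-- The set `A_ρ = { (1/t)[(1+t)Δ(ρ) − ρ] : t > 0, (1+t)Δ(ρ) − ρ ≥ 0 }`. -/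
def Aset (ρ : Matrix ι ι ℂ) : Set (Matrix ι ι ℂ) :=
  { σ | ∃ t : ℝ, 0 < t ∧ ((1 + t) • dephase ρ - ρ).PosSemidef ∧
      σ = t⁻¹ • ((1 + t) • dephase ρ - ρ) }

/-- The `n`-fold tensor power `ρ^{⊗ n}`. -/
def tpow (ρ : Matrix ι ι ℂ) (n : ℕ) : Matrix (Fin n → ι) (Fin n → ι) ℂ :=
  Matrix.of fun i j => ∏ t, ρ (i t) (j t)


end OneShot

/-!
If `ρ ≤ λ δ` with `δ` incoherent, positivity of `Λ` gives `Λ ρ ≤ λ Λ(δ)` and `Λ(δ)` is again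
incoherent, so every `λ` feasible for `ρ` is feasible for `Λ ρ` and the infimum can only drop.
Taking logarithms is legitimate because the feasible set of `ρ` is nonempty (`ρ ≤ 1 = d · 𝟙/d`)
and, comparing traces, every feasible `λ` for a state is at least `1`.
-/

open scoped MatrixOrder

namespace OneShot

variable {ι κ : Type*}

lemma CompletelyPositive.posSemidef_map {Λ : Matrix ι ι ℂ →ₗ[ℂ] Matrix κ κ ℂ}
    (hΛ : CompletelyPositive Λ) {A : Matrix ι ι ℂ} (hA : A.PosSemidef) : (Λ A).PosSemidef := by
  let e := Equiv.uniqueProd ι (Fin 1)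
  have h := hΛ 1 (A.submatrix e e) ((Matrix.posSemidef_submatrix_equiv e).mpr hA)
  exact (Matrix.posSemidef_submatrix_equiv (Equiv.uniqueProd κ (Fin 1))).mp h

section Fintype

variable [Fintype ι]

lemma IsState.le_one [DecidableEq ι] {ρ : Matrix ι ι ℂ} (hρ : IsState ρ) : ρ ≤ 1 := by
  have hH := hρ.1.isHermitian
  rw [CFC.le_one_iff (R := ℝ) ρ hH.isSelfAdjoint, hH.spectrum_real_eq_range_eigenvalues]
  rintro _ ⟨i, rfl⟩
  have htrace : ∑ j, hH.eigenvalues j = 1 := by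
    simpa [hρ.2] using congrArg Complex.re hH.trace_eq_sum_eigenvalues.symm
  exact htrace ▸ Finset.single_le_sum (fun j _ => hρ.1.eigenvalues_nonneg j) (Finset.mem_univ i)

lemma IsState.nonempty {ρ : Matrix ι ι ℂ} (hρ : IsState ρ) : Nonempty ι := by
  by_contra h
  rw [not_nonempty_iff] at h
  simpa [Matrix.trace] using hρ.2

lemma isIncoherent_maximallyMixed [DecidableEq ι] [Nonempty ι] :
    IsIncoherent ((Fintype.card ι : ℂ)⁻¹ • (1 : Matrix ι ι ℂ)) := by
  refine ⟨⟨Matrix.PosSemidef.one.smul (by positivity), ?_⟩, Matrix.isDiag_one.smul _⟩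
  simp [Matrix.trace_smul]

lemma one_le_of_posSemidef_smul_sub {σ δ : Matrix ι ι ℂ} (hσ : σ.trace = 1) (hδ : δ.trace = 1)
    {l : ℝ} (h : (l • δ - σ).PosSemidef) : 1 ≤ l := by
  have := h.trace_nonneg
  rw [Matrix.trace_sub, Matrix.trace_smul, hσ, hδ, Complex.real_smul, mul_one, sub_nonneg] at this
  exact_mod_cast this

def cmaxFeasible (ρ : Matrix ι ι ℂ) : Set ℝ :=
  {l | 0 ≤ l ∧ ∃ δ, IsIncoherent δ ∧ (l • δ - ρ).PosSemidef}

lemma one_le_of_mem_cmaxFeasible {σ : Matrix ι ι ℂ} (hσ : σ.trace = 1) {l : ℝ}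
    (hl : l ∈ cmaxFeasible σ) : 1 ≤ l := by
  obtain ⟨-, δ, hδ, hle⟩ := hl
  exact one_le_of_posSemidef_smul_sub hσ hδ.1.2 hle

lemma IsState.card_mem_cmaxFeasible [DecidableEq ι] {ρ : Matrix ι ι ℂ} (hρ : IsState ρ) :
    (Fintype.card ι : ℝ) ∈ cmaxFeasible ρ := by
  have := hρ.nonempty
  refine ⟨by positivity, _, isIncoherent_maximallyMixed, ?_⟩
  have hcard : (Fintype.card ι : ℂ) ≠ 0 := by simp
  rw [← Complex.coe_smul, smul_smul, Complex.ofReal_natCast, mul_inv_cancel₀ hcard, one_smul]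
  exact hρ.le_one

variable [Fintype κ]

lemma cmaxFeasible_subset_map {Λ : Matrix ι ι ℂ →ₗ[ℂ] Matrix κ κ ℂ} (hΛ : CompletelyPositive Λ)
    (hinc : ∀ δ, IsIncoherent δ → IsIncoherent (Λ δ)) (ρ : Matrix ι ι ℂ) :
    cmaxFeasible ρ ⊆ cmaxFeasible (Λ ρ) := by
  rintro l ⟨hl, δ, hδ, hle⟩
  refine ⟨hl, Λ δ, hinc δ hδ, ?_⟩
  simpa only [map_sub, LinearMap.map_smul_of_tower] using hΛ.posSemidef_map hle

lemma Cmax_le_Cmax_of_cmaxFeasible_subset {ρ : Matrix ι ι ℂ} {σ : Matrix κ κ ℂ}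
    (hσ : σ.trace = 1) (hne : (cmaxFeasible ρ).Nonempty)
    (hsub : cmaxFeasible ρ ⊆ cmaxFeasible σ) : Cmax σ ≤ Cmax ρ := by
  have hbdd : ∀ l ∈ cmaxFeasible σ, 1 ≤ l := fun _ => one_le_of_mem_cmaxFeasible hσ
  have hσ_pos : 0 < sInf (cmaxFeasible σ) := one_pos.trans_le (le_csInf (hne.mono hsub) hbdd)
  exact Real.logb_le_logb_of_le one_lt_two hσ_pos (csInf_le_csInf ⟨1, hbdd⟩ hne hsub)

end Fintype

/-- `C_max` is monotone under maximally incoherent operations. -/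
theorem Cmax_MIO_monotone {d : ℕ}
    (Λ : Matrix (Fin d) (Fin d) ℂ →ₗ[ℂ] Matrix (Fin d) (Fin d) ℂ)
    (hCP : CompletelyPositive Λ) (hTP : TracePreserving Λ)
    (hinc : ∀ δ, IsIncoherent δ → IsIncoherent (Λ δ))
    (ρ : Matrix (Fin d) (Fin d) ℂ) (hρ : IsState ρ) :
    Cmax (Λ ρ) ≤ Cmax ρ :=
  Cmax_le_Cmax_of_cmaxFeasible_subset (by rw [hTP, hρ.2]) ⟨_, hρ.card_mem_cmaxFeasible⟩
    (cmaxFeasible_subset_map hCP hinc ρ)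

end OneShot
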